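/- arXiv:2409.02005 — 2 statements merged into one kernel-verified Lean document; each statement's English description precedes it below -/
import Mathlib

section
/- (Error decoupling.) Let C_1,…,C_p be n×n symmetric matrices, Q ∈ ℝ^{n×k} with Q^T Q = I, and set D_i = Q^T C_i Q and E_i = C_i Q − Q D_i. Let W ∈ ℝ^{k×k} be orthogonal, Λ_i be k×k matrices, and F_i = D_i W − W Λ_i. Define Q̃ = Q W. Then Σ_{i=1}^p ‖C_i Q̃ − Q̃ Λ_i‖_F² = Σ_{i=1}^p (‖E_i‖_F² + ‖F_i‖_F²). -/
open Matrix

noncomputable def frobSq {m n : Type*} [Fintype m] [Fintype n]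
    (X : Matrix m n ℝ) : ℝ := Matrix.trace (Xᵀ * X)

/-- Error decoupling: the total residual of the two-step procedure splits into
the sum of squares of the errors of each step. -/
theorem error_decoupling {n k p : ℕ}
    (C : Fin p → Matrix (Fin n) (Fin n) ℝ) (hC : ∀ i, (C i).IsSymm)
    (Q : Matrix (Fin n) (Fin k) ℝ) (hQ : Qᵀ * Q = 1)
    (W : Matrix (Fin k) (Fin k) ℝ) (hW : Wᵀ * W = 1)
    (Λ : Fin p → Matrix (Fin k) (Fin k) ℝ)
    (D : Fin p → Matrix (Fin k) (Fin k) ℝ) (hD : ∀ i, D i = Qᵀ * C i * Q)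
    (E : Fin p → Matrix (Fin n) (Fin k) ℝ) (hE : ∀ i, E i = C i * Q - Q * D i)
    (F : Fin p → Matrix (Fin k) (Fin k) ℝ) (hF : ∀ i, F i = D i * W - W * Λ i) :
    ∑ i, frobSq (C i * (Q * W) - (Q * W) * Λ i)
      = ∑ i, (frobSq (E i) + frobSq (F i)) := by
  have hWWt : W * Wᵀ = 1 := mul_eq_one_comm.mp hW
  refine Finset.sum_congr rfl fun i _ => ?_
  have hQE : Qᵀ * E i = 0 := by
    rw [hE i, Matrix.mul_sub, ← Matrix.mul_assoc Qᵀ Q, hQ, Matrix.one_mul,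
      hD i, ← Matrix.mul_assoc Qᵀ (C i) Q, sub_self]
  have hkey : C i * (Q * W) - (Q * W) * Λ i = E i * W + Q * F i := by
    simp only [hE i, hF i, Matrix.sub_mul, Matrix.mul_sub, Matrix.mul_assoc]
    abel
  rw [hkey]
  unfold frobSq
  rw [transpose_add, Matrix.add_mul, Matrix.mul_add, Matrix.mul_add,
    transpose_mul, transpose_mul, trace_add, trace_add, trace_add]
  have h1 : trace (Wᵀ * (E i)ᵀ * (E i * W)) = trace ((E i)ᵀ * E i) := by
    rw [trace_mul_comm, Matrix.mul_assoc (E i) W, ← Matrix.mul_assoc W Wᵀ,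
      hWWt, Matrix.one_mul, trace_mul_comm]
  have h2 : trace (Wᵀ * (E i)ᵀ * (Q * F i)) = 0 := by
    have : (E i)ᵀ * Q = 0 := by
      have := congrArg transpose hQE
      simpa using this
    rw [Matrix.mul_assoc Wᵀ, ← Matrix.mul_assoc (E i)ᵀ Q, this]
    simp
  have h3 : trace ((F i)ᵀ * Qᵀ * (E i * W)) = 0 := by
    rw [Matrix.mul_assoc ((F i)ᵀ), ← Matrix.mul_assoc Qᵀ, hQE]
    simp
  have h4 : trace ((F i)ᵀ * Qᵀ * (Q * F i)) = trace ((F i)ᵀ * F i) := by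
    rw [Matrix.mul_assoc ((F i)ᵀ), ← Matrix.mul_assoc Qᵀ Q, hQ, Matrix.one_mul]
  rw [h1, h2, h3, h4]
  ring
end

section
/- Let f(Q, Λ_1,…,Λ_p) = Σ_i ‖C_i Q − Q Λ_i‖_F², γ(Q) = Σ_i ‖C_i Q − Q(Q^T C_i Q)‖_F², and ω(Q) = Σ_i ‖Off(Q^T C_i Q)‖_F². Suppose Q̃ minimizes γ over n×k orthonormal matrices and Λ̃_i = diag(Q̃^T C_i Q̃). Suppose (Q̲, Λ̲_1,…,Λ̲_p) minimizes f over orthonormal Q and diagonal Λ_i. Then f(Q̃, {Λ̃_i}) − (ω(Q̃) − ω(Q̲)) ≤ f(Q̲, {Λ̲_i}) ≤ f(Q̃, {Λ̃_i}). -/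
open Matrix

noncomputable def fObj {n k p : ℕ} (C : Fin p → Matrix (Fin n) (Fin n) ℝ)
    (Q : Matrix (Fin n) (Fin k) ℝ) (Λ : Fin p → Matrix (Fin k) (Fin k) ℝ) : ℝ :=
  ∑ i, frobSq (C i * Q - Q * Λ i)

noncomputable def gammaObj {n k p : ℕ} (C : Fin p → Matrix (Fin n) (Fin n) ℝ)
    (Q : Matrix (Fin n) (Fin k) ℝ) : ℝ :=
  ∑ i, frobSq (C i * Q - Q * (Qᵀ * C i * Q))

noncomputable def omegaObj {n k p : ℕ} (C : Fin p → Matrix (Fin n) (Fin n) ℝ)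
    (Q : Matrix (Fin n) (Fin k) ℝ) : ℝ :=
  ∑ i, frobSq ((Qᵀ * C i * Q) - Matrix.diagonal (fun j => (Qᵀ * C i * Q) j j))

lemma frobSq_eq_sum {m n : Type*} [Fintype m] [Fintype n] (X : Matrix m n ℝ) :
    frobSq X = ∑ j, ∑ i, (X i j)^2 := by
  simp [frobSq, Matrix.trace, Matrix.mul_apply, Matrix.diag, sq]

lemma frobSq_decomp {n k : ℕ} (C : Matrix (Fin n) (Fin n) ℝ) (hC : C.IsSymm)
    (Q : Matrix (Fin n) (Fin k) ℝ) (hQ : Qᵀ * Q = 1)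
    (Λ : Matrix (Fin k) (Fin k) ℝ) :
    frobSq (C * Q - Q * Λ) =
      frobSq (C * Q - Q * (Qᵀ * C * Q)) + frobSq (Qᵀ * C * Q - Λ) := by
  set M := Qᵀ * C * Q with hM
  have hMsymm : Mᵀ = M := by
    rw [hM, Matrix.transpose_mul, Matrix.transpose_mul, Matrix.transpose_transpose,
      hC.eq, Matrix.mul_assoc]
  have hsplit : C * Q - Q * Λ = (C * Q - Q * M) + Q * (M - Λ) := by
    rw [Matrix.mul_sub]; abel
  rw [hsplit]
  simp only [frobSq, Matrix.transpose_add, Matrix.add_mul, Matrix.mul_add,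
    Matrix.trace_add]
  have hA : (C * Q - Q * M)ᵀ * Q = 0 := by
    rw [Matrix.transpose_sub, Matrix.sub_mul, Matrix.transpose_mul, Matrix.transpose_mul,
      Matrix.mul_assoc, Matrix.mul_assoc, hQ, Matrix.mul_one, hC.eq, hMsymm, hM,
      Matrix.mul_assoc, sub_self]
  have h1 : (C * Q - Q * M)ᵀ * (Q * (M - Λ)) = 0 := by
    rw [← Matrix.mul_assoc, hA, Matrix.zero_mul]
  have h2 : (Q * (M - Λ))ᵀ * (C * Q - Q * M) = 0 := by
    have := congrArg Matrix.transpose h1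
    simpa [Matrix.transpose_mul] using this
  have h3 : (Q * (M - Λ))ᵀ * (Q * (M - Λ)) = (M - Λ)ᵀ * (M - Λ) := by
    rw [Matrix.transpose_mul, Matrix.mul_assoc, ← Matrix.mul_assoc Qᵀ, hQ, Matrix.one_mul]
  rw [h1, h2, h3]
  simp [Matrix.trace_sub]

lemma off_le_sub_diag {k : ℕ} (M Λ : Matrix (Fin k) (Fin k) ℝ) (hΛ : Λ.IsDiag) :
    frobSq (M - Matrix.diagonal (fun j => M j j)) ≤ frobSq (M - Λ) := by
  rw [frobSq_eq_sum, frobSq_eq_sum]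
  apply Finset.sum_le_sum; intro j _
  apply Finset.sum_le_sum; intro i _
  by_cases h : i = j
  · subst h; simp [Matrix.sub_apply, Matrix.diagonal_apply_eq]; positivity
  · rw [Matrix.sub_apply, Matrix.sub_apply, Matrix.diagonal_apply_ne _ h, hΛ h]

lemma fObj_eq {n k p : ℕ} (C : Fin p → Matrix (Fin n) (Fin n) ℝ)
    (hC : ∀ i, (C i).IsSymm) (Q : Matrix (Fin n) (Fin k) ℝ) (hQ : Qᵀ * Q = 1)
    (Λ : Fin p → Matrix (Fin k) (Fin k) ℝ) :
    (∑ i, frobSq (C i * Q - Q * Λ i)) =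
      (∑ i, frobSq (C i * Q - Q * (Qᵀ * C i * Q))) +
      ∑ i, frobSq (Qᵀ * C i * Q - Λ i) := by
  rw [← Finset.sum_add_distrib]
  exact Finset.sum_congr rfl fun i _ => frobSq_decomp (C i) (hC i) Q hQ (Λ i)

/-- Comparison between the decoupled solution and the global optimum:
`f(Q̃,{Λ̃_i}) − (ω(Q̃) − ω(Q̲)) ≤ f(Q̲,{Λ̲_i}) ≤ f(Q̃,{Λ̃_i})`. -/
theorem decoupling_corollary {n k p : ℕ}
    (C : Fin p → Matrix (Fin n) (Fin n) ℝ) (hC : ∀ i, (C i).IsSymm)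
    (Qt : Matrix (Fin n) (Fin k) ℝ) (hQt : Qtᵀ * Qt = 1)
    (hQtmin : ∀ Q : Matrix (Fin n) (Fin k) ℝ, Qᵀ * Q = 1 →
      gammaObj C Qt ≤ gammaObj C Q)
    (Λt : Fin p → Matrix (Fin k) (Fin k) ℝ)
    (hΛt : ∀ i, Λt i = Matrix.diagonal (fun j => (Qtᵀ * C i * Qt) j j))
    (Qu : Matrix (Fin n) (Fin k) ℝ) (hQu : Quᵀ * Qu = 1)
    (Λu : Fin p → Matrix (Fin k) (Fin k) ℝ) (hΛu : ∀ i, (Λu i).IsDiag)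
    (hQumin : ∀ (Q : Matrix (Fin n) (Fin k) ℝ)
        (Λ : Fin p → Matrix (Fin k) (Fin k) ℝ),
      Qᵀ * Q = 1 → (∀ i, (Λ i).IsDiag) → fObj C Qu Λu ≤ fObj C Q Λ) :
    fObj C Qt Λt - (omegaObj C Qt - omegaObj C Qu) ≤ fObj C Qu Λu ∧
    fObj C Qu Λu ≤ fObj C Qt Λt := by
  have hdiagt : ∀ i, (Λt i).IsDiag := fun i => (hΛt i) ▸ Matrix.isDiag_diagonal _
  have hft : fObj C Qt Λt = gammaObj C Qt + omegaObj C Qt := by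
    simp only [fObj, gammaObj, omegaObj]
    rw [fObj_eq C hC Qt hQt]
    congr 1
    exact Finset.sum_congr rfl fun i _ => by rw [hΛt i]
  have hfu : fObj C Qu Λu = gammaObj C Qu + ∑ i, frobSq (Quᵀ * C i * Qu - Λu i) :=
    fObj_eq C hC Qu hQu Λu
  have homega : omegaObj C Qu ≤ ∑ i, frobSq (Quᵀ * C i * Qu - Λu i) :=
    Finset.sum_le_sum fun i _ => off_le_sub_diag _ _ (hΛu i)
  have hgamma : gammaObj C Qt ≤ gammaObj C Qu := hQtmin Qu hQu
  constructor
  · rw [hft, hfu]; linarith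
  · exact hQumin Qt Λt hQt hdiagt
end
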